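/- arXiv:1804.05009 — 2 statements merged into one kernel-verified Lean document; each statement's English description precedes it below -/
import Mathlib

section
/- A convex body K in ℝ^n is in Behrend position if and only if the normalized difference body (1/D(K))·(K − K) is in Löwner position, where K − K = {x − y : x, y ∈ K}. -/
open MeasureTheory Metric Set Pointwise
open scoped RealInnerProductSpace

/-- A convex body: a compact convex set with nonempty interior. -/
def IsConvexBody {n : ℕ} (K : Set (EuclideanSpace ℝ (Fin n))) : Prop :=
  IsCompact K ∧ Convex ℝ K ∧ (interior K).Nonempty

/-- The isodiametric quotient `iq(K) = vol(K) / D(K)^n`. -/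
noncomputable def iq {n : ℕ} (K : Set (EuclideanSpace ℝ (Fin n))) : ℝ :=
  (volume K).toReal / Metric.diam K ^ n

/-- `K` is in Behrend position if `iq(K)` is maximal among invertible linear images of `K`. -/
def InBehrendPosition {n : ℕ} (K : Set (EuclideanSpace ℝ (Fin n))) : Prop :=
  ∀ A : EuclideanSpace ℝ (Fin n) ≃ₗ[ℝ] EuclideanSpace ℝ (Fin n), iq (A '' K) ≤ iq K

/-- `K` is in Löwner position if `K ⊆ B₂ⁿ` and every ellipsoid (affine image of the unit
ball) containing `K` has volume at least that of the unit ball. -/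
def InLownerPosition {n : ℕ} (K : Set (EuclideanSpace ℝ (Fin n))) : Prop :=
  K ⊆ closedBall 0 1 ∧
  ∀ (A : EuclideanSpace ℝ (Fin n) ≃ₗ[ℝ] EuclideanSpace ℝ (Fin n)) (t : EuclideanSpace ℝ (Fin n)),
    K ⊆ (fun x => A x + t) '' closedBall 0 1 →
    volume (closedBall (0 : EuclideanSpace ℝ (Fin n)) 1) ≤
      volume ((fun x => A x + t) '' closedBall 0 1)

open scoped ENNReal

/-!
Write `L = D(K)⁻¹ • (K - K)`. Both positions say the same thing: every invertible linear map `A`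
with `D(A K) ≤ D(K)` satisfies `vol (A K) ≤ vol K`.

For Behrend position, rescale `A` so that `D(A K) = D(K)`, which leaves `iq (A K)` unchanged.
For Löwner position, since `L` is symmetric, an ellipsoid `A B + t` containing `L` already
contains `L` when centred at `0`, and `L ⊆ A B` means exactly `D(A⁻¹ K) ≤ D(K)`; both volume
comparisons then amount to `1 ≤ |det A|`.
-/

theorem one_le_abs_det_symm_iff {M : Type*} [AddCommGroup M] [Module ℝ M] (A : M ≃ₗ[ℝ] M) :
    1 ≤ |LinearMap.det (A.symm : M →ₗ[ℝ] M)| ↔ |LinearMap.det (A : M →ₗ[ℝ] M)| ≤ 1 := by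
  rw [LinearEquiv.det_coe_symm, abs_inv, one_le_inv₀ (abs_pos.2 A.isUnit_det'.ne_zero)]

theorem Convex.subset_image_of_subset_image_add {E F 𝓕 : Type*} [AddCommGroup E] [Module ℝ E]
    [AddCommGroup F] [Module ℝ F] [FunLike 𝓕 E F] [LinearMapClass 𝓕 ℝ E F] (f : 𝓕) {C : Set E}
    (hC : Convex ℝ C) (hCneg : ∀ x ∈ C, -x ∈ C) {S : Set F} (hSneg : ∀ z ∈ S, -z ∈ S) {t : F}
    (hS : S ⊆ (fun x => f x + t) '' C) : S ⊆ f '' C := by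
  intro z hz
  obtain ⟨u, hu, hfu⟩ := hS hz
  obtain ⟨w, hw, hfw⟩ := hS (hSneg z hz)
  refine ⟨(1 / 2 : ℝ) • u + (1 / 2 : ℝ) • -w,
    hC hu (hCneg w hw) (by norm_num) (by norm_num) (by norm_num), ?_⟩
  rw [map_add, map_smul, map_smul, map_neg, eq_sub_of_add_eq hfu, eq_sub_of_add_eq hfw]
  module

theorem neg_mem_smul_sub_self {R E : Type*} [Monoid R] [AddCommGroup E] [DistribMulAction R E]
    {K : Set E} (c : R) {z : E} (hz : z ∈ c • (K - K)) : -z ∈ c • (K - K) := by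
  obtain ⟨_, ⟨x, hx, y, hy, rfl⟩, rfl⟩ := hz
  rw [← smul_neg, neg_sub]
  exact smul_mem_smul_set (sub_mem_sub hy hx)

theorem nontrivial_of_measure_ne_zero {α : Type*} [MeasurableSpace α] (μ : Measure α)
    [NullSingletonClass μ] {K : Set α} (h0 : μ K ≠ 0) : K.Nontrivial :=
  not_subsingleton_iff.1 fun h => h0 (h.measure_zero μ)

section Normed

variable {E : Type*} [NormedAddCommGroup E] [NormedSpace ℝ E]

theorem Bornology.IsBounded.image_linearEquiv [FiniteDimensional ℝ E] {K : Set E}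
    (hK : Bornology.IsBounded K) (A : E ≃ₗ[ℝ] E) : Bornology.IsBounded (A '' K) :=
  hK.image (A.toContinuousLinearEquiv : E →L[ℝ] E)

theorem inv_diam_smul_sub_subset_closedBall {K : Set E} (hK : Bornology.IsBounded K) :
    (diam K)⁻¹ • (K - K) ⊆ closedBall 0 1 := by
  rintro _ ⟨_, ⟨x, hx, y, hy, rfl⟩, rfl⟩
  rw [mem_closedBall_zero_iff, norm_smul, norm_inv, Real.norm_of_nonneg diam_nonneg,
    ← dist_eq_norm]
  exact inv_mul_le_one_of_le₀ (dist_le_diam_of_mem hK hx hy) diam_nonneg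

theorem inv_smul_sub_subset_image_closedBall_iff [FiniteDimensional ℝ E] {K : Set E}
    (hK : Bornology.IsBounded K) {r : ℝ} (hr : 0 < r) (A : E ≃ₗ[ℝ] E) :
    r⁻¹ • (K - K) ⊆ A '' closedBall 0 1 ↔ diam (A.symm '' K) ≤ r := by
  have hpair : ∀ x y, r⁻¹ • (x - y) ∈ A '' closedBall 0 1 ↔ dist (A.symm x) (A.symm y) ≤ r := by
    intro x y
    rw [A.image_eq_preimage_symm, mem_preimage, mem_closedBall_zero_iff, map_smul, map_sub,
      norm_smul, norm_inv, Real.norm_of_nonneg hr.le, inv_mul_le_iff₀ hr, mul_one, dist_eq_norm]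
  constructor
  · intro h
    refine diam_le_of_forall_dist_le hr.le ?_
    rintro _ ⟨x, hx, rfl⟩ _ ⟨y, hy, rfl⟩
    exact (hpair x y).1 (h (smul_mem_smul_set (sub_mem_sub hx hy)))
  · rintro h _ ⟨_, ⟨x, hx, y, hy, rfl⟩, rfl⟩
    exact (hpair x y).2 ((dist_le_diam_of_mem (hK.image_linearEquiv A.symm)
      (mem_image_of_mem _ hx) (mem_image_of_mem _ hy)).trans h)

variable [MeasurableSpace E] [BorelSpace E] [FiniteDimensional ℝ E] (μ : Measure E)
  [μ.IsAddHaarMeasure]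

theorem addHaar_image_linearMap_le_iff (f : E →ₗ[ℝ] E) {s : Set E} (h0 : μ s ≠ 0)
    (htop : μ s ≠ ∞) : μ (f '' s) ≤ μ s ↔ |LinearMap.det f| ≤ 1 := by
  rw [Measure.addHaar_image_linearMap]
  nth_rw 2 [← one_mul (μ s)]
  rw [ENNReal.mul_le_mul_iff_left h0 htop, ENNReal.ofReal_le_one]

theorem le_addHaar_image_linearMap_iff (f : E →ₗ[ℝ] E) {s : Set E} (h0 : μ s ≠ 0)
    (htop : μ s ≠ ∞) : μ s ≤ μ (f '' s) ↔ 1 ≤ |LinearMap.det f| := by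
  rw [Measure.addHaar_image_linearMap]
  nth_rw 1 [← one_mul (μ s)]
  rw [ENNReal.mul_le_mul_iff_left h0 htop, ENNReal.one_le_ofReal]

end Normed

section Positions

variable {n : ℕ} {K : Set (EuclideanSpace ℝ (Fin n))}

theorem iq_smul {c : ℝ} (hc : c ≠ 0) (S : Set (EuclideanSpace ℝ (Fin n))) :
    iq (c • S) = iq S := by
  unfold iq
  rw [Measure.addHaar_smul, diam_smul₀, finrank_euclideanSpace_fin, ENNReal.toReal_mul,
    ENNReal.toReal_ofReal (abs_nonneg _), abs_pow, Real.norm_eq_abs, mul_pow,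
    mul_div_mul_left _ _ (pow_ne_zero _ (abs_ne_zero.2 hc))]

theorem inBehrendPosition_iff_forall_diam_le [Nontrivial (EuclideanSpace ℝ (Fin n))]
    (hKb : Bornology.IsBounded K) (hK0 : volume K ≠ 0) :
    InBehrendPosition K ↔ ∀ A : EuclideanSpace ℝ (Fin n) ≃ₗ[ℝ] EuclideanSpace ℝ (Fin n),
      diam (A '' K) ≤ diam K → volume (A '' K) ≤ volume K := by
  have hKnt := nontrivial_of_measure_ne_zero volume hK0
  have hD : 0 < diam K := diam_pos hKnt hKb
  have hdiam_pos : ∀ A : EuclideanSpace ℝ (Fin n) ≃ₗ[ℝ] EuclideanSpace ℝ (Fin n),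
      0 < diam (A '' K) := fun A => diam_pos (hKnt.image A.injective) (hKb.image_linearEquiv A)
  constructor
  · intro hB A hdiam
    have hiq : (volume (A '' K)).toReal / diam K ^ n ≤ (volume K).toReal / diam K ^ n :=
      (div_le_div_of_nonneg_left ENNReal.toReal_nonneg (pow_pos (hdiam_pos A) n)
        (pow_le_pow_left₀ (hdiam_pos A).le hdiam n)).trans (hB A)
    rw [div_le_div_iff_of_pos_right (pow_pos hD n)] at hiq
    exact (ENNReal.toReal_le_toReal (hKb.image_linearEquiv A).measure_lt_top.ne
      hKb.measure_lt_top.ne).1 hiq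
  · intro hP A
    have hc : 0 < diam K / diam (A '' K) := div_pos hD (hdiam_pos A)
    set A' := A.trans (LinearEquiv.smulOfNeZero ℝ _ _ hc.ne')
    have himg : A' '' K = (diam K / diam (A '' K)) • (A '' K) := by
      rw [← image_smul, image_image]
      rfl
    have hdiam : diam (A' '' K) = diam K := by
      rw [himg, diam_smul₀, Real.norm_of_nonneg hc.le, div_mul_cancel₀ _ (hdiam_pos A).ne']
    calc iq (A '' K) = iq (A' '' K) := by rw [himg, iq_smul hc.ne']
      _ ≤ iq K := by
        unfold iq
        rw [hdiam]
        exact div_le_div_of_nonneg_right (ENNReal.toReal_mono hKb.measure_lt_top.ne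
          (hP A' hdiam.le)) (pow_nonneg diam_nonneg n)

theorem inLownerPosition_inv_diam_smul_sub_iff [Nontrivial (EuclideanSpace ℝ (Fin n))]
    (hKb : Bornology.IsBounded K) (hK0 : volume K ≠ 0) :
    InLownerPosition ((diam K)⁻¹ • (K - K)) ↔
      ∀ A : EuclideanSpace ℝ (Fin n) ≃ₗ[ℝ] EuclideanSpace ℝ (Fin n),
        diam (A '' K) ≤ diam K → volume (A '' K) ≤ volume K := by
  have hD : 0 < diam K := diam_pos (nontrivial_of_measure_ne_zero volume hK0) hKb
  have hKtop : volume K ≠ ∞ := hKb.measure_lt_top.ne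
  have hB0 : volume (closedBall (0 : EuclideanSpace ℝ (Fin n)) 1) ≠ 0 :=
    (measure_closedBall_pos volume _ one_pos).ne'
  have hBtop : volume (closedBall (0 : EuclideanSpace ℝ (Fin n)) 1) ≠ ∞ :=
    measure_closedBall_lt_top.ne
  constructor
  · rintro ⟨-, hmin⟩ A hdiam
    have hL := (inv_smul_sub_subset_image_closedBall_iff hKb hD A.symm).2 hdiam
    have hvol := hmin A.symm 0 (by simpa only [add_zero] using hL)
    simp only [add_zero] at hvol
    exact (addHaar_image_linearMap_le_iff volume (A : _ →ₗ[ℝ] _) hK0 hKtop).2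
      ((one_le_abs_det_symm_iff A).1
        ((le_addHaar_image_linearMap_iff volume (A.symm : _ →ₗ[ℝ] _) hB0 hBtop).1 hvol))
  · refine fun hP => ⟨inv_diam_smul_sub_subset_closedBall hKb, fun A t hsub => ?_⟩
    have hL := Convex.subset_image_of_subset_image_add A (convex_closedBall 0 1)
      (fun x hx => by simpa only [mem_closedBall_zero_iff, norm_neg] using hx)
      (fun _ => neg_mem_smul_sub_self _) hsub
    have hvol := hP A.symm ((inv_smul_sub_subset_image_closedBall_iff hKb hD A).1 hL)
    rw [← image_image (· + t) A, image_add_right, measure_preimage_add_right]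
    exact (le_addHaar_image_linearMap_iff volume (A : _ →ₗ[ℝ] _) hB0 hBtop).2
      ((one_le_abs_det_symm_iff A.symm).2
        ((addHaar_image_linearMap_le_iff volume (A.symm : _ →ₗ[ℝ] _) hK0 hKtop).1 hvol))

end Positions

/-- A convex body is in Behrend position iff its normalized difference body
`(1/D(K))·(K - K)` is in Löwner position. -/
theorem behrend_iff_normalized_difference_lowner {n : ℕ}
    (K : Set (EuclideanSpace ℝ (Fin n))) (hK : IsConvexBody K) :
    InBehrendPosition K ↔ InLownerPosition ((Metric.diam K)⁻¹ • (K - K)) := by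
  obtain ⟨hKc, -, hKint⟩ := hK
  rcases subsingleton_or_nontrivial (EuclideanSpace ℝ (Fin n)) with hE | hE
  · refine ⟨fun _ => ⟨inv_diam_smul_sub_subset_closedBall hKc.isBounded, fun A t _ => ?_⟩,
      fun _ A => by rw [show ⇑A = id from funext fun _ => Subsingleton.elim _ _, image_id]⟩
    have hB : (closedBall (0 : EuclideanSpace ℝ (Fin n)) 1).Nonempty :=
      nonempty_closedBall.2 zero_le_one
    rw [Subsingleton.eq_univ_of_nonempty (hB.image _), Subsingleton.eq_univ_of_nonempty hB]
  have hK0 : volume K ≠ 0 :=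
    ((isOpen_interior.measure_pos volume hKint).trans_le (measure_mono interior_subset)).ne'
  exact (inBehrendPosition_iff_forall_diam_le hKc.isBounded hK0).trans
    (inLownerPosition_inv_diam_smul_sub_iff hKc.isBounded hK0).symm
end

section
/- Let n ≤ m ≤ n(n+1)/2, let u_1, …, u_m be unit vectors in ℝ^n, and let λ_1, …, λ_m ≥ 0 be scalars such that Σ_{i=1}^m λ_i u_i u_i^T = I_n. Then for every 1 ≤ j ≤ n, there exist indices 1 ≤ i_1 < … < i_j ≤ m such that the j-dimensional volume of the simplex conv{0, u_{i_1}, …, u_{i_j}} satisfies vol_j(conv{0, u_{i_1}, …, u_{i_j}})² ≥ C(n, j)·(m/n)^j / (C(m, j)·(j!)²). Equivalently, det((U_J)^T U_J) ≥ C(n, j)·(m/n)^j / C(m, j) for the index set J = {i_1, …, i_j}, where U_J ∈ ℝ^{n×j} has columns u_{i_1}, …, u_{i_j}. -/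
/-!
Write the decomposition as `I_n = Uᵀ Λ U`, where `U` has the `u_i` as rows and `Λ = diagonal λ`.
By the Weinstein–Aronszajn identity, `Uᵀ (Λ U)` and `Λ U Uᵀ` have the same sums of principal
`j × j` minors, so `∑_{|J| = j} (∏_{i ∈ J} λ_i) det G_J = C(n, j)`, where `G = U Uᵀ` is the Gram
matrix of the `u_i`. Taking traces gives `∑ λ_i = n`, so Maclaurin's inequality bounds the total
weight `∑_{|J| = j} ∏_{i ∈ J} λ_i` by `C(m, j) (n / m)^j`. The largest `det G_J` is at least the
weighted average, which is the claimed bound.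
-/

open Finset Matrix

theorem pow_succ_add_mul_sub_le_pow_succ {A B : ℝ} (hA : 0 ≤ A) (hB : 0 ≤ B) (k : ℕ) :
    A ^ (k + 1) + (k + 1) * A ^ k * (B - A) ≤ B ^ (k + 1) := by
  induction k with
  | zero => simp
  | succ k ih =>
    have hsq : 0 ≤ (k + 1) * A ^ k * (B - A) ^ 2 := by positivity
    push_cast
    linear_combination hsq + B * ih

/-- The induction step of Maclaurin's inequality: `A` is the mean of `N` numbers and `t` the next
one. By Pascal's rule and absorption the left side equals
`C(N+1, k+1) (A^(k+1) + (k+1) A^k (B - A))` for the new mean `B`, and the tangent line of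
`x ↦ x^(k+1)` at `A` lies below its graph. -/
theorem Nat.choose_mul_pow_succ_add_le (N k : ℕ) {A t : ℝ} (hA : 0 ≤ A) (ht : 0 ≤ t) :
    N.choose (k + 1) * A ^ (k + 1) + t * (N.choose k * A ^ k) ≤
      (N + 1).choose (k + 1) * ((N * A + t) / (N + 1)) ^ (k + 1) := by
  have hmean : (N + 1 : ℝ) * ((N * A + t) / (N + 1)) = N * A + t := by field_simp
  generalize (N * A + t) / (N + 1) = B at hmean ⊢
  have hB : 0 ≤ B := by nlinarith
  have hpascal : ((N + 1).choose (k + 1) : ℝ) = N.choose k + N.choose (k + 1) := by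
    exact_mod_cast Nat.choose_succ_succ' N k
  have habsorb : (N + 1 : ℝ) * N.choose k = (N + 1).choose (k + 1) * (k + 1) := by
    exact_mod_cast Nat.add_one_mul_choose_eq N k
  have htangent := mul_le_mul_of_nonneg_left (pow_succ_add_mul_sub_le_pow_succ hA hB k)
    (Nat.cast_nonneg ((N + 1).choose (k + 1)))
  linear_combination htangent + (A ^ k * B - A ^ (k + 1)) * habsorb - A ^ (k + 1) * hpascal
    - N.choose k * A ^ k * hmean

theorem Multiset.esymm_cons_succ {R : Type*} [CommSemiring R] (a : R) (s : Multiset R) (k : ℕ) :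
    (a ::ₘ s).esymm (k + 1) = s.esymm (k + 1) + a * s.esymm k := by
  simp [Multiset.esymm, Multiset.map_map, Multiset.sum_map_mul_left]

/-- Maclaurin's inequality. -/
theorem Multiset.esymm_le_choose_mul_mean_pow {s : Multiset ℝ} (hs : ∀ x ∈ s, 0 ≤ x) (k : ℕ) :
    s.esymm k ≤ (card s).choose k * (s.sum / card s) ^ k := by
  induction s using Multiset.induction_on generalizing k with
  | empty => cases k <;> simp [Multiset.esymm, Multiset.powersetCard_zero_right]
  | cons a s ih =>
    cases k with
    | zero => simp [Multiset.esymm]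
    | succ k =>
      have ha : 0 ≤ a := hs a (Multiset.mem_cons_self a s)
      have hs' : ∀ x ∈ s, 0 ≤ x := fun x hx => hs x (Multiset.mem_cons_of_mem hx)
      have hmean : (card s : ℝ) * (s.sum / card s) = s.sum := by
        rcases eq_or_ne (card s) 0 with h | h
        · simp [Multiset.card_eq_zero.mp h]
        · field_simp
      calc (a ::ₘ s).esymm (k + 1) = s.esymm (k + 1) + a * s.esymm k :=
            Multiset.esymm_cons_succ a s k
        _ ≤ (card s).choose (k + 1) * (s.sum / card s) ^ (k + 1)
              + a * ((card s).choose k * (s.sum / card s) ^ k) :=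
            add_le_add (ih hs' _) (mul_le_mul_of_nonneg_left (ih hs' k) ha)
        _ ≤ (card s + 1).choose (k + 1)
              * ((card s * (s.sum / card s) + a) / (card s + 1)) ^ (k + 1) :=
            Nat.choose_mul_pow_succ_add_le _ k
              (div_nonneg (Multiset.sum_nonneg hs') (Nat.cast_nonneg _)) ha
        _ = (card (a ::ₘ s)).choose (k + 1) * ((a ::ₘ s).sum / card (a ::ₘ s)) ^ (k + 1) := by
            rw [hmean, Multiset.card_cons, Multiset.sum_cons, add_comm a]
            push_cast
            rfl

theorem Finset.sum_powersetCard_prod_le {ι : Type*} (s : Finset ι) {f : ι → ℝ}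
    (hf : ∀ i ∈ s, 0 ≤ f i) (k : ℕ) :
    ∑ t ∈ s.powersetCard k, ∏ i ∈ t, f i ≤
      s.card.choose k * ((∑ i ∈ s, f i) / s.card) ^ k := by
  have h := Multiset.esymm_le_choose_mul_mean_pow (s := s.val.map f)
    (by simpa using hf) k
  rwa [Finset.esymm_map_val, Multiset.card_map] at h

theorem Finset.exists_div_le_of_le_sum_mul {α : Type*} {F : Finset α} {w g : α → ℝ} {c W : ℝ}
    (hw : ∀ x ∈ F, 0 ≤ w x) (hc : 0 < c) (hW : ∑ x ∈ F, w x ≤ W)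
    (h : c ≤ ∑ x ∈ F, w x * g x) : ∃ x ∈ F, c / W ≤ g x := by
  have hF : F.Nonempty := nonempty_of_sum_ne_zero (hc.trans_le h).ne'
  obtain ⟨x, hx, hmax⟩ := F.exists_max_image g hF
  have hc_le : c ≤ (∑ y ∈ F, w y) * g x := by
    rw [sum_mul]
    exact h.trans (sum_le_sum fun y hy => mul_le_mul_of_nonneg_left (hmax y hy) (hw y hy))
  have hgx : 0 ≤ g x := by
    by_contra! hneg
    exact (hc.trans_le hc_le).not_ge
      (mul_nonpos_of_nonneg_of_nonpos (sum_nonneg hw) hneg.le)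
  have hWpos : 0 < W := (pos_of_mul_pos_left (hc.trans_le hc_le) hgx).trans_le hW
  refine ⟨x, hx, (div_le_iff₀ hWpos).mpr ?_⟩
  calc c ≤ (∑ y ∈ F, w y) * g x := hc_le
    _ ≤ g x * W := by rw [mul_comm]; exact mul_le_mul_of_nonneg_left hW hgx

namespace Matrix

theorem sum_smul_vecMulVec_self {ι κ R : Type*} [Fintype κ] [DecidableEq κ] [CommSemiring R]
    (w : κ → R) (v : κ → ι → R) :
    ∑ i, w i • vecMulVec (v i) (v i) = (of v)ᵀ * (diagonal w * of v) := by
  ext a b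
  rw [mul_apply]
  simp only [Matrix.sum_apply, Matrix.smul_apply, vecMulVec_apply, diagonal_mul,
    transpose_apply, of_apply, smul_eq_mul]
  exact sum_congr rfl fun i _ => by ring

theorem sum_eq_card_of_sum_smul_vecMulVec_eq_one {ι κ R : Type*} [Fintype ι] [Fintype κ]
    [DecidableEq ι] [CommSemiring R] {w : κ → R} {v : κ → ι → R}
    (hv : ∀ i, v i ⬝ᵥ v i = 1) (h : ∑ i, w i • vecMulVec (v i) (v i) = 1) :
    ∑ i, w i = Fintype.card ι := by
  simpa [trace_sum, hv] using congrArg trace h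

variable {ι κ R : Type*} [Fintype ι] [Fintype κ] [DecidableEq ι] [DecidableEq κ] [CommRing R]

theorem sum_det_submatrix_mul_comm (A : Matrix ι κ R) (B : Matrix κ ι R) (k : ℕ) :
    ∑ s ∈ univ.powersetCard k, ((A * B).submatrix (Subtype.val : s → ι) Subtype.val).det =
      ∑ s ∈ univ.powersetCard k, ((B * A).submatrix (Subtype.val : s → κ) Subtype.val).det := by
  rw [← coeff_det_one_add_X_smul_eq_sum_minors, ← coeff_det_one_add_X_smul_eq_sum_minors,
    Matrix.map_mul, Matrix.map_mul, ← smul_mul, ← smul_mul, det_one_add_mul_comm,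
    Matrix.mul_smul, Matrix.smul_mul]

theorem sum_det_submatrix_one (k : ℕ) :
    ∑ s ∈ univ.powersetCard k,
        ((1 : Matrix ι ι R).submatrix (Subtype.val : s → ι) Subtype.val).det =
      (Fintype.card ι).choose k := by
  simp [submatrix_one _ Subtype.val_injective]

theorem det_submatrix_diagonal_mul (d : ι → R) (M : Matrix ι ι R) (s : Finset ι) :
    ((diagonal d * M).submatrix (Subtype.val : s → ι) Subtype.val).det =
      (∏ i ∈ s, d i) * (M.submatrix (Subtype.val : s → ι) Subtype.val).det := by
  have h : (diagonal d * M).submatrix (Subtype.val : s → ι) Subtype.val =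
      diagonal (fun i : s => d i) * M.submatrix Subtype.val Subtype.val := by
    ext a b
    simp [diagonal_mul]
  rw [h, det_mul, det_diagonal, prod_coe_sort s d]

theorem sum_prod_mul_det_gram_eq_choose {w : κ → R} {v : κ → ι → R}
    (h : ∑ i, w i • vecMulVec (v i) (v i) = 1) (k : ℕ) :
    ∑ J ∈ univ.powersetCard k,
        (∏ i ∈ J, w i) * (of fun (a b : J) => ∑ c, v a.1 c * v b.1 c).det =
      (Fintype.card ι).choose k := by
  calc _ = ∑ J ∈ univ.powersetCard k,
          ((diagonal w * of v * (of v)ᵀ).submatrix (Subtype.val : J → κ) Subtype.val).det := by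
        simp only [Matrix.mul_assoc, det_submatrix_diagonal_mul]
        rfl
    _ = ∑ s ∈ univ.powersetCard k,
          (((of v)ᵀ * (diagonal w * of v)).submatrix (Subtype.val : s → ι) Subtype.val).det :=
        sum_det_submatrix_mul_comm _ _ k
    _ = (Fintype.card ι).choose k := by
        rw [← sum_smul_vecMulVec_self, h, sum_det_submatrix_one]

end Matrix

theorem dvoretzky_rogers_type_volume_bound_general {n m : ℕ} (u : Fin m → Fin n → ℝ) (lam : Fin m → ℝ)
    (hu : ∀ i, ∑ a, (u i a) ^ 2 = 1) (hlam : ∀ i, 0 ≤ lam i)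
    (hdecomp : ∑ i, lam i • Matrix.vecMulVec (u i) (u i) = (1 : Matrix (Fin n) (Fin n) ℝ))
    (j : ℕ) (hj2 : j ≤ n) :
    ∃ J ∈ Finset.powersetCard j (Finset.univ : Finset (Fin m)),
      (Nat.choose n j : ℝ) * ((m : ℝ) / n) ^ j / (Nat.choose m j) ≤
        Matrix.det (Matrix.of fun (a b : J) => ∑ c, u a.1 c * u b.1 c) ∧
      (Nat.choose n j : ℝ) * ((m : ℝ) / n) ^ j /
          ((Nat.choose m j : ℝ) * (j.factorial : ℝ) ^ 2) ≤
        (Real.sqrt (Matrix.det (Matrix.of fun (a b : J) => ∑ c, u a.1 c * u b.1 c)) /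
            (j.factorial : ℝ)) ^ 2 := by
  have htrace : ∑ i, lam i = n := by
    simpa using sum_eq_card_of_sum_smul_vecMulVec_eq_one
      (fun i => by simpa [dotProduct, sq] using hu i) hdecomp
  have hweight :
      ∑ J ∈ univ.powersetCard j, ∏ i ∈ J, lam i ≤ m.choose j * ((n : ℝ) / m) ^ j := by
    simpa [htrace] using sum_powersetCard_prod_le univ (fun i _ => hlam i) j
  have hchoose : (0 : ℝ) < n.choose j := by exact_mod_cast Nat.choose_pos hj2
  obtain ⟨J, hJ, hbound⟩ :=
    exists_div_le_of_le_sum_mul (fun J _ => prod_nonneg fun i _ => hlam i) hchoose hweight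
      (by simpa using (sum_prod_mul_det_gram_eq_choose hdecomp j).ge)
  have hratio : (n.choose j : ℝ) * ((m : ℝ) / n) ^ j / m.choose j =
      n.choose j / (m.choose j * ((n : ℝ) / m) ^ j) := by
    rw [← inv_div (n : ℝ) m, inv_pow, div_mul_eq_div_div_swap, div_eq_mul_inv (n.choose j : ℝ)]
  rw [← hratio] at hbound
  have hgram : 0 ≤ (of fun (a b : J) => ∑ c, u a.1 c * u b.1 c).det :=
    le_trans (by positivity) hbound
  refine ⟨J, hJ, hbound, ?_⟩
  rw [div_pow _ (j.factorial : ℝ), Real.sq_sqrt hgram, ← div_div]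
  exact div_le_div_of_nonneg_right hbound (by positivity)

/-- Dvoretzky–Rogers-type volume bound: if `I_n = Σ λ_i u_i u_iᵀ` with unit vectors
`u_i` and nonnegative scalars `λ_i`, `n ≤ m ≤ n(n+1)/2`, then for every `1 ≤ j ≤ n`
there is a `j`-element index set `J` with
`vol_j(conv{0, u_j : j ∈ J})² = det((U_J)ᵀ U_J)/(j!)² ≥ C(n,j)·(m/n)^j/(C(m,j)·(j!)²)`. -/
theorem dvoretzky_rogers_type_volume_bound {n m : ℕ} (hnm : n ≤ m)
    (hm : m ≤ n * (n + 1) / 2) (u : Fin m → Fin n → ℝ) (lam : Fin m → ℝ)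
    (hu : ∀ i, ∑ a, (u i a) ^ 2 = 1) (hlam : ∀ i, 0 ≤ lam i)
    (hdecomp : ∑ i, lam i • Matrix.vecMulVec (u i) (u i) = (1 : Matrix (Fin n) (Fin n) ℝ))
    (j : ℕ) (hj1 : 1 ≤ j) (hj2 : j ≤ n) :
    ∃ J ∈ Finset.powersetCard j (Finset.univ : Finset (Fin m)),
      (Nat.choose n j : ℝ) * ((m : ℝ) / n) ^ j / (Nat.choose m j) ≤
        Matrix.det (Matrix.of fun (a b : J) => ∑ c, u a.1 c * u b.1 c) ∧
      (Nat.choose n j : ℝ) * ((m : ℝ) / n) ^ j /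
          ((Nat.choose m j : ℝ) * (j.factorial : ℝ) ^ 2) ≤
        (Real.sqrt (Matrix.det (Matrix.of fun (a b : J) => ∑ c, u a.1 c * u b.1 c)) /
            (j.factorial : ℝ)) ^ 2 :=
  dvoretzky_rogers_type_volume_bound_general u lam hu hlam hdecomp j hj2
end
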